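/- arXiv:1807.03462 — 3 statements merged into one kernel-verified Lean document; each statement's English description precedes it below -/
import Mathlib

section
/- For ε > 0, the function q ↦ E_n L_{α,ε}(x,q) = ((1-α)/n) Σ_{i: x_i ≤ q} (q - x_i)^{1+ε} + (α/n) Σ_{i: x_i > q} (x_i - q)^{1+ε} is strictly convex on ℝ, and hence has at most one minimizer. -/
open Finset Real Filter Topology

noncomputable def L (α ε x q : ℝ) : ℝ :=
  if x ≤ q then (1 - α) * (q - x) ^ (1 + ε) else α * (x - q) ^ (1 + ε)

noncomputable def EnL (n : ℕ) (α ε : ℝ) (x : Fin n → ℝ) (q : ℝ) : ℝ :=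
  (1 / (n : ℝ)) * ∑ i, L α ε (x i) q

/-!
With `p = 1 + ε > 1`, the loss is `L(q) = (1 - α) ((q - x)⁺)^p + α ((x - q)⁺)^p`, and
`t ↦ (t⁺)^p` is differentiable everywhere, even at the kink `0`, with derivative `p (t⁺)^ε`.
Between any two points `(q - x)⁺` strictly increases or `(x - q)⁺` strictly decreases, so the
derivative of `L` is strictly increasing; the same then holds for the nonempty average `EnL`,
which is therefore strictly convex and has at most one minimizer.
-/

theorem hasDerivAt_max_zero_rpow {p : ℝ} (hp : 1 < p) (t : ℝ) :
    HasDerivAt (fun s : ℝ ↦ max s 0 ^ p) (p * max t 0 ^ (p - 1)) t := by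
  have hp0 : p - 1 ≠ 0 := by linarith
  rcases lt_trichotomy t 0 with ht | rfl | ht
  · have hzero : (fun s : ℝ ↦ max s 0 ^ p) =ᶠ[𝓝 t] fun _ ↦ 0 := by
      filter_upwards [Iio_mem_nhds ht] with s hs
      simp [max_eq_right (le_of_lt (Set.mem_Iio.mp hs)), zero_rpow (by linarith : p ≠ 0)]
    simpa [max_eq_right ht.le, zero_rpow hp0] using
      (hasDerivAt_const t (0 : ℝ)).congr_of_eventuallyEq hzero
  · have hleft : HasDerivWithinAt (fun s : ℝ ↦ max s 0 ^ p) 0 (Set.Iic 0) 0 :=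
      (hasDerivWithinAt_const 0 _ (0 : ℝ)).congr
        (fun s hs ↦ by simp [max_eq_right (Set.mem_Iic.mp hs), zero_rpow (by linarith : p ≠ 0)])
        (by simp [zero_rpow (by linarith : p ≠ 0)])
    have hright : HasDerivWithinAt (fun s : ℝ ↦ max s 0 ^ p) 0 (Set.Ici 0) 0 := by
      have := (hasDerivAt_rpow_const (x := 0) (Or.inr hp.le)).hasDerivWithinAt (s := Set.Ici 0)
      simpa [zero_rpow hp0] using this.congr
        (fun s hs ↦ by simp [max_eq_left (Set.mem_Ici.mp hs)]) (by simp)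
    simpa [zero_rpow hp0, Set.Iic_union_Ici] using hleft.union hright
  · have hpos : (fun s : ℝ ↦ max s 0 ^ p) =ᶠ[𝓝 t] fun s ↦ s ^ p := by
      filter_upwards [Ioi_mem_nhds ht] with s hs
      rw [max_eq_left (le_of_lt (Set.mem_Ioi.mp hs))]
    simpa [max_eq_left ht.le] using
      (hasDerivAt_rpow_const (Or.inl ht.ne')).congr_of_eventuallyEq hpos

theorem max_zero_rpow_lt_max_zero_rpow {a b r : ℝ} (hab : a < b) (hb : 0 < b) (hr : 0 < r) :
    max a 0 ^ r < max b 0 ^ r := by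
  rw [max_eq_left hb.le]
  exact rpow_lt_rpow (le_max_right a 0) (max_lt hab hb) hr

theorem L_eq_max_zero_rpow {α ε : ℝ} (hε : 0 < ε) (x q : ℝ) :
    L α ε x q = (1 - α) * max (q - x) 0 ^ (1 + ε) + α * max (x - q) 0 ^ (1 + ε) := by
  have hp : 1 + ε ≠ 0 := by linarith
  unfold L
  split_ifs with h
  · rw [max_eq_left (sub_nonneg.mpr h), max_eq_right (sub_nonpos.mpr h), zero_rpow hp, mul_zero,
      add_zero]
  · have h := (not_le.mp h).le
    rw [max_eq_right (sub_nonpos.mpr h), max_eq_left (sub_nonneg.mpr h), zero_rpow hp,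
      mul_zero, zero_add]

noncomputable def derivL (α ε x q : ℝ) : ℝ :=
  (1 + ε) * ((1 - α) * max (q - x) 0 ^ ε - α * max (x - q) 0 ^ ε)

theorem hasDerivAt_L {α ε : ℝ} (hε : 0 < ε) (x q : ℝ) :
    HasDerivAt (L α ε x) (derivL α ε x q) q := by
  have hp : 1 < 1 + ε := by linarith
  have hright := (hasDerivAt_max_zero_rpow hp (q - x)).comp_sub_const q x
  have hleft := (hasDerivAt_max_zero_rpow hp (x - q)).comp_const_sub x q
  rw [show L α ε x = _ from funext (L_eq_max_zero_rpow hε x)]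
  refine ((hright.const_mul (1 - α)).fun_add (hleft.const_mul α)).congr_deriv ?_
  rw [derivL, add_sub_cancel_left]
  ring

theorem strictMono_derivL {α ε : ℝ} (hα : α ∈ Set.Ioo (0 : ℝ) 1) (hε : 0 < ε) (x : ℝ) :
    StrictMono (derivL α ε x) := by
  intro r s hrs
  have hmono : max (r - x) 0 ^ ε ≤ max (s - x) 0 ^ ε :=
    rpow_le_rpow (le_max_right _ _) (max_le_max_right 0 (by linarith)) hε.le
  have hanti : max (x - s) 0 ^ ε ≤ max (x - r) 0 ^ ε :=
    rpow_le_rpow (le_max_right _ _) (max_le_max_right 0 (by linarith)) hε.le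
  have hstrict : max (r - x) 0 ^ ε < max (s - x) 0 ^ ε ∨ max (x - s) 0 ^ ε < max (x - r) 0 ^ ε := by
    rcases lt_or_ge x s with hxs | hsx
    · exact .inl (max_zero_rpow_lt_max_zero_rpow (by linarith) (by linarith) hε)
    · exact .inr (max_zero_rpow_lt_max_zero_rpow (by linarith) (by linarith) hε)
  unfold derivL
  have h1 : 0 < 1 - α := sub_pos.mpr hα.2
  refine mul_lt_mul_of_pos_left ?_ (by linarith)
  rcases hstrict with h | h <;> nlinarith [hα.1]

theorem strictConvexOn_EnL {n : ℕ} (hn : 1 ≤ n) (x : Fin n → ℝ) {α ε : ℝ}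
    (hα : α ∈ Set.Ioo (0 : ℝ) 1) (hε : 0 < ε) :
    StrictConvexOn ℝ Set.univ (EnL n α ε x) := by
  have hderiv (q : ℝ) :
      HasDerivAt (EnL n α ε x) ((1 / (n : ℝ)) * ∑ i, derivL α ε (x i) q) q :=
    (HasDerivAt.fun_sum fun i _ ↦ hasDerivAt_L hε (x i) q).const_mul _
  have hpos : (0 : ℝ) < 1 / n := by positivity
  have hne : (univ : Finset (Fin n)).Nonempty := univ_nonempty_iff.mpr ⟨⟨0, hn⟩⟩
  refine StrictMono.strictConvexOn_univ_of_deriv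
    (continuous_iff_continuousAt.mpr fun q ↦ (hderiv q).continuousAt) ?_
  intro r s hrs
  rw [(hderiv r).deriv, (hderiv s).deriv]
  exact mul_lt_mul_of_pos_left
    (sum_lt_sum_of_nonempty hne fun i _ ↦ strictMono_derivL hα hε (x i) hrs) hpos

theorem stmt_0 (n : ℕ) (hn : 1 ≤ n) (x : Fin n → ℝ) (α ε : ℝ)
    (hα : α ∈ Set.Ioo (0 : ℝ) 1) (hε : 0 < ε) :
    StrictConvexOn ℝ Set.univ (EnL n α ε x) ∧
    ∀ q₁ q₂ : ℝ, IsMinOn (EnL n α ε x) Set.univ q₁ →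
      IsMinOn (EnL n α ε x) Set.univ q₂ → q₁ = q₂ := by
  have hconvex := strictConvexOn_EnL hn x hα hε
  exact ⟨hconvex, fun q₁ q₂ h₁ h₂ ↦
    hconvex.eq_of_isMinOn h₁ h₂ (Set.mem_univ _) (Set.mem_univ _)⟩
end

section
/- Suppose F_n(q) = α for all q in an open interval (q_L, q_H) containing no sample points, where the atoms q_L and q_H are themselves sample points. Then the function G(q) = (1-α) Σ_{i: x_i < q} log(q - x_i) − α Σ_{i: x_i > q} log(x_i - q) is strictly increasing and continuous on (q_L, q_H), tends to −∞ as q ↓ q_L, tends to +∞ as q ↑ q_H, and hence has a unique zero q_α^log in (q_L, q_H). -/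
open Finset Real Filter Topology

noncomputable def Fn (n : ℕ) (x : Fin n → ℝ) (t : ℝ) : ℝ :=
  ((Finset.univ.filter (fun i => x i ≤ t)).card : ℝ) / n

noncomputable def G (n : ℕ) (x : Fin n → ℝ) (α q : ℝ) : ℝ :=
  (1 - α) * ∑ i ∈ Finset.univ.filter (fun i => x i < q), Real.log (q - x i)
    - α * ∑ i ∈ Finset.univ.filter (fun i => q < x i), Real.log (x i - q)

/-! On the gap `(q_L, q_H)` the index sets `{i | x i < q}` and `{i | q < x i}` do not depend on
`q`, so `G` is `(1 - α)` times an increasing sum of logarithms minus `α` times a decreasing one.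
The sample at `q_L` puts a `log (q - q_L) → -∞` singularity into the first sum and the sample at
`q_H` a `log (q_H - q) → -∞` singularity into the second; the zero then comes from the
intermediate value theorem and is unique by strict monotonicity. -/

theorem StrictMonoOn.existsUnique_eq_of_tendsto {α δ : Type*} [ConditionallyCompleteLinearOrder α]
    [TopologicalSpace α] [OrderTopology α] [DenselyOrdered α] [LinearOrder δ] [TopologicalSpace δ]
    [OrderClosedTopology δ] {g : α → δ} {a b : α} (hab : a < b)
    (hmono : StrictMonoOn g (Set.Ioo a b)) (hcont : ContinuousOn g (Set.Ioo a b))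
    (hbot : Tendsto g (𝓝[>] a) atBot) (htop : Tendsto g (𝓝[<] b) atTop) (c : δ) :
    ∃! q, q ∈ Set.Ioo a b ∧ g q = c := by
  have := nhdsGT_neBot_of_exists_gt ⟨b, hab⟩
  have := nhdsLT_neBot_of_exists_lt ⟨a, hab⟩
  obtain ⟨p, hpc, hp⟩ := ((hbot.eventually_le_atBot c).and (Ioo_mem_nhdsGT hab)).exists
  obtain ⟨r, hcr, hr⟩ := ((htop.eventually_ge_atTop c).and (Ioo_mem_nhdsLT hab)).exists
  obtain ⟨q, hq, hqc⟩ := hcont.surjOn_Icc hp hr ⟨hpc, hcr⟩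
  exact ⟨q, ⟨hq, hqc⟩, fun q' ⟨hq', hq'c⟩ => hmono.injOn hq' hq (hq'c.trans hqc.symm)⟩

section LogSums

variable {ι : Type*} {s : Finset ι} {f : ι → ℝ}

theorem strictMonoOn_sum_log_sub {a : ℝ} (hs : s.Nonempty) (hle : ∀ i ∈ s, f i ≤ a) :
    StrictMonoOn (fun q => ∑ i ∈ s, log (q - f i)) (Set.Ioi a) := by
  intro p hp q _ hpq
  refine Finset.sum_lt_sum_of_nonempty hs fun i hi => log_lt_log ?_ (by linarith)
  linarith [hle i hi, Set.mem_Ioi.mp hp]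

theorem continuousAt_sum_log_sub {q : ℝ} (hlt : ∀ i ∈ s, f i < q) :
    ContinuousAt (fun q => ∑ i ∈ s, log (q - f i)) q :=
  tendsto_finsetSum _ fun i hi =>
    (continuousAt_id.sub continuousAt_const).log (sub_pos.mpr (hlt i hi)).ne'

theorem tendsto_sum_log_sub_nhdsGT {a : ℝ} (hle : ∀ i ∈ s, f i ≤ a) (hatom : ∃ i ∈ s, f i = a) :
    Tendsto (fun q => ∑ i ∈ s, log (q - f i)) (𝓝[>] a) atBot := by
  classical
  obtain ⟨j, hj, hja⟩ := hatom
  -- the atom `j` gives `log (q - a)`; near `a` every other term is at most its value at `a + 1`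
  have hsub : Tendsto (· - a) (𝓝[>] a) (𝓝[>] 0) := by
    have := (map_subRight_nhdsGT (c := a) (a := a)).le
    rwa [sub_self] at this
  have hlog : Tendsto (fun q => log (q - a) + ∑ i ∈ s.erase j, log (a + 1 - f i)) (𝓝[>] a)
      atBot :=
    tendsto_atBot_add_const_right _ _ (tendsto_log_nhdsGT_zero.comp hsub)
  refine tendsto_atBot_mono' _ ?_ hlog
  filter_upwards [Ioo_mem_nhdsGT (lt_add_one a)] with q hq
  rw [← Finset.add_sum_erase s _ hj, hja]
  gcongr with i hi
  · linarith [hle i (Finset.mem_of_mem_erase hi), hq.1]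
  · exact hq.2.le

theorem antitoneOn_sum_log_sub_right {b : ℝ} (hge : ∀ i ∈ s, b ≤ f i) :
    AntitoneOn (fun q => ∑ i ∈ s, log (f i - q)) (Set.Iio b) := by
  intro p _ q hq hpq
  refine Finset.sum_le_sum fun i hi => log_le_log ?_ (by linarith)
  linarith [hge i hi, Set.mem_Iio.mp hq]

theorem continuousAt_sum_log_sub_right {q : ℝ} (hlt : ∀ i ∈ s, q < f i) :
    ContinuousAt (fun q => ∑ i ∈ s, log (f i - q)) q :=
  tendsto_finsetSum _ fun i hi =>
    (continuousAt_const.sub continuousAt_id).log (sub_pos.mpr (hlt i hi)).ne'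

theorem tendsto_sum_log_sub_right_nhdsLT {b : ℝ} (hge : ∀ i ∈ s, b ≤ f i)
    (hatom : ∃ i ∈ s, f i = b) :
    Tendsto (fun q => ∑ i ∈ s, log (f i - q)) (𝓝[<] b) atBot := by
  classical
  obtain ⟨j, hj, hjb⟩ := hatom
  have hsub : Tendsto (b - ·) (𝓝[<] b) (𝓝[>] 0) := by
    have := (map_subLeft_nhdsLT (c := b) (a := b)).le
    rwa [sub_self] at this
  have hlog : Tendsto (fun q => log (b - q) + ∑ i ∈ s.erase j, log (f i - (b - 1))) (𝓝[<] b)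
      atBot :=
    tendsto_atBot_add_const_right _ _ (tendsto_log_nhdsGT_zero.comp hsub)
  refine tendsto_atBot_mono' _ ?_ hlog
  filter_upwards [Ioo_mem_nhdsLT (sub_one_lt b)] with q hq
  rw [← Finset.add_sum_erase s _ hj, hjb]
  gcongr with i hi
  · linarith [hge i (Finset.mem_of_mem_erase hi), hq.2]
  · exact hq.1.le

end LogSums

section LogScore

variable {ι : Type*} {s t : Finset ι} {f : ι → ℝ} {α a b : ℝ}

noncomputable def logScore (s t : Finset ι) (f : ι → ℝ) (α q : ℝ) : ℝ :=
  (1 - α) * ∑ i ∈ s, log (q - f i) - α * ∑ i ∈ t, log (f i - q)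

theorem strictMonoOn_logScore (hs : s.Nonempty) (hle : ∀ i ∈ s, f i ≤ a)
    (hge : ∀ i ∈ t, b ≤ f i) (hα0 : 0 ≤ α) (hα1 : α < 1) :
    StrictMonoOn (logScore s t f α) (Set.Ioo a b) := by
  intro p hp q hq hpq
  have hs := strictMonoOn_sum_log_sub hs hle hp.1 hq.1 hpq
  have ht := antitoneOn_sum_log_sub_right hge hp.2 hq.2 hpq.le
  have := mul_lt_mul_of_pos_left hs (sub_pos.mpr hα1)
  have := mul_le_mul_of_nonneg_left ht hα0
  simp only [logScore]
  linarith

theorem continuousOn_logScore (hle : ∀ i ∈ s, f i ≤ a) (hge : ∀ i ∈ t, b ≤ f i) :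
    ContinuousOn (logScore s t f α) (Set.Ioo a b) := fun _ hq =>
  (((continuousAt_sum_log_sub fun i hi => (hle i hi).trans_lt hq.1).const_mul _).sub
    ((continuousAt_sum_log_sub_right fun i hi => hq.2.trans_le (hge i hi)).const_mul _)
    ).continuousWithinAt

theorem tendsto_logScore_nhdsGT (hle : ∀ i ∈ s, f i ≤ a) (hatom : ∃ i ∈ s, f i = a)
    (hgt : ∀ i ∈ t, a < f i) (hα1 : α < 1) :
    Tendsto (logScore s t f α) (𝓝[>] a) atBot := by
  have hs := (tendsto_sum_log_sub_nhdsGT hle hatom).const_mul_atBot (sub_pos.mpr hα1)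
  have ht := ((continuousAt_sum_log_sub_right hgt).continuousWithinAt (s := Set.Ioi a)).tendsto
    |>.const_mul α
  exact (hs.atBot_add ht.neg).congr fun _ => (sub_eq_add_neg _ _).symm

theorem tendsto_logScore_nhdsLT (hlt : ∀ i ∈ s, f i < b) (hge : ∀ i ∈ t, b ≤ f i)
    (hatom : ∃ i ∈ t, f i = b) (hα0 : 0 < α) :
    Tendsto (logScore s t f α) (𝓝[<] b) atTop := by
  have hs := ((continuousAt_sum_log_sub hlt).continuousWithinAt (s := Set.Iio b)).tendsto
    |>.const_mul (1 - α)
  have ht := (tendsto_sum_log_sub_right_nhdsLT hge hatom).const_mul_atBot hα0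
  exact (hs.add_atTop (tendsto_neg_atBot_atTop.comp ht)).congr fun _ => (sub_eq_add_neg _ _).symm

end LogScore

theorem G_eqOn_logScore {n : ℕ} {x : Fin n → ℝ} {α qL qH : ℝ}
    (hgap : ∀ i, x i ∉ Set.Ioo qL qH) :
    Set.EqOn (G n x α)
      (logScore (univ.filter (x · ≤ qL)) (univ.filter (qH ≤ x ·)) x α) (Set.Ioo qL qH) := by
  intro q hq
  have hbelow : univ.filter (x · < q) = univ.filter (x · ≤ qL) := Finset.filter_congr fun i _ =>
    ⟨fun h => not_lt.mp fun h' => hgap i ⟨h', h.trans hq.2⟩, fun h => h.trans_lt hq.1⟩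
  have habove : univ.filter (q < x ·) = univ.filter (qH ≤ x ·) := Finset.filter_congr fun i _ =>
    ⟨fun h => not_lt.mp fun h' => hgap i ⟨hq.1.trans h, h'⟩, fun h => hq.2.trans_le h⟩
  simp only [G, logScore, hbelow, habove]

theorem stmt_3_general (n : ℕ) (x : Fin n → ℝ) (α : ℝ)
    (hα : α ∈ Set.Ioo (0 : ℝ) 1) (qL qH : ℝ) (hLH : qL < qH)
    (hqL : ∃ i, x i = qL) (hqH : ∃ i, x i = qH)
    (hgap : ∀ i, x i ∉ Set.Ioo qL qH) :
    StrictMonoOn (G n x α) (Set.Ioo qL qH) ∧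
    ContinuousOn (G n x α) (Set.Ioo qL qH) ∧
    Filter.Tendsto (G n x α) (nhdsWithin qL (Set.Ioi qL)) Filter.atBot ∧
    Filter.Tendsto (G n x α) (nhdsWithin qH (Set.Iio qH)) Filter.atTop ∧
    ∃! q : ℝ, q ∈ Set.Ioo qL qH ∧ G n x α q = 0 := by
  obtain ⟨hα0, hα1⟩ := hα
  obtain ⟨iL, hiL⟩ := hqL
  obtain ⟨iH, hiH⟩ := hqH
  set A := univ.filter (x · ≤ qL)
  set B := univ.filter (qH ≤ x ·)
  have hA : ∀ i ∈ A, x i ≤ qL := fun i hi => (mem_filter.mp hi).2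
  have hB : ∀ i ∈ B, qH ≤ x i := fun i hi => (mem_filter.mp hi).2
  have hiLA : iL ∈ A := by simp [A, hiL]
  have hiHB : iH ∈ B := by simp [B, hiH]
  have hG := G_eqOn_logScore (α := α) hgap
  have hmono := (strictMonoOn_logScore ⟨iL, hiLA⟩ hA hB hα0.le hα1).congr hG.symm
  have hcont := (continuousOn_logScore hA hB).congr hG
  have hbot := (tendsto_logScore_nhdsGT hA ⟨iL, hiLA, hiL⟩ (fun i hi => hLH.trans_le (hB i hi))
    hα1).congr' (hG.eventuallyEq_of_mem (Ioo_mem_nhdsGT hLH)).symm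
  have htop := (tendsto_logScore_nhdsLT (fun i hi => (hA i hi).trans_lt hLH) hB ⟨iH, hiHB, hiH⟩
    hα0).congr' (hG.eventuallyEq_of_mem (Ioo_mem_nhdsLT hLH)).symm
  exact ⟨hmono, hcont, hbot, htop, hmono.existsUnique_eq_of_tendsto hLH hcont hbot htop 0⟩

theorem stmt_3 (n : ℕ) (hn : 1 ≤ n) (x : Fin n → ℝ) (α : ℝ)
    (hα : α ∈ Set.Ioo (0 : ℝ) 1) (qL qH : ℝ) (hLH : qL < qH)
    (hqL : ∃ i, x i = qL) (hqH : ∃ i, x i = qH)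
    (hgap : ∀ i, x i ∉ Set.Ioo qL qH)
    (hF : ∀ q ∈ Set.Ico qL qH, Fn n x q = α) :
    StrictMonoOn (G n x α) (Set.Ioo qL qH) ∧
    ContinuousOn (G n x α) (Set.Ioo qL qH) ∧
    Filter.Tendsto (G n x α) (nhdsWithin qL (Set.Ioi qL)) Filter.atBot ∧
    Filter.Tendsto (G n x α) (nhdsWithin qH (Set.Iio qH)) Filter.atTop ∧
    ∃! q : ℝ, q ∈ Set.Ioo qL qH ∧ G n x α q = 0 :=
  stmt_3_general n x α hα qL qH hLH hqL hqH hgap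
end

section
/- Let q_α be a unique sample α-quantile, i.e. F_n(q_α⁻) < α and F_n(q_α) > α. Then for every δ > 0 there exists ε_0 > 0 such that for all 0 < ε < ε_0, the unique minimizer q_{α,ε} of E_n L_{α,ε}(x,·) lies in (q_α − δ, q_α + δ). In particular q_{α,ε} → q_α as ε ↓ 0. -/
open Finset Real Filter Topology

noncomputable def FnMinus (n : ℕ) (x : Fin n → ℝ) (t : ℝ) : ℝ :=
  ((Finset.univ.filter (fun i => x i < t)).card : ℝ) / n

/-! For `ε ≥ 0` the empirical loss `EnL n α ε x` is convex in `q`, and as `ε ↓ 0`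
it converges pointwise to the check loss `EnL n α 0 x`. Because the sample quantile is unique,
the check loss strictly increases from `qα` to `qα ± δ`: by at least `δ (Fn qα - α)` to the right
and `δ (α - FnMinus qα)` to the left. These strict inequalities persist for small `ε`, and a convex
function whose value at `qα` is below its values at `qα ± δ` has all its minimisers in
`(qα - δ, qα + δ)`. -/

open Set

theorem ConvexOn.rpow {E : Type*} [AddCommGroup E] [Module ℝ E] {s : Set E} {f : E → ℝ}
    (hf : ConvexOn ℝ s f) (hf₀ : ∀ ⦃x⦄, x ∈ s → 0 ≤ f x) {p : ℝ} (hp : 1 ≤ p) :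
    ConvexOn ℝ s fun x => f x ^ p := by
  refine ⟨hf.1, fun x hx y hy a b ha hb hab => ?_⟩
  calc f (a • x + b • y) ^ p ≤ (a • f x + b • f y) ^ p :=
        rpow_le_rpow (hf₀ (hf.1 hx hy ha hb hab)) (hf.2 hx hy ha hb hab) (by linarith)
    _ ≤ a • f x ^ p + b • f y ^ p := (convexOn_rpow hp).2 (hf₀ hx) (hf₀ hy) ha hb hab

theorem ConvexOn.mem_Ioo_of_le {f : ℝ → ℝ} (hf : ConvexOn ℝ univ f) {a δ m : ℝ} (hδ : 0 ≤ δ)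
    (hm : f m ≤ f a) (hlt_left : f a < f (a - δ)) (hlt_right : f a < f (a + δ)) :
    m ∈ Ioo (a - δ) (a + δ) := by
  refine ⟨lt_of_not_ge fun h => ?_, lt_of_not_ge fun h => ?_⟩
  · have := hf.le_on_segment (mem_univ m) (mem_univ a)
      (by rw [segment_eq_Icc (by linarith)]; exact ⟨h, by linarith⟩)
    rw [max_eq_right hm] at this
    linarith
  · have := hf.le_on_segment (mem_univ a) (mem_univ m)
      (by rw [segment_eq_Icc (by linarith)]; exact ⟨by linarith, h⟩)
    rw [max_eq_left hm] at this
    linarith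

theorem L_eq_max {α ε : ℝ} (hε : 1 + ε ≠ 0) (x q : ℝ) :
    L α ε x q = (1 - α) * max (q - x) 0 ^ (1 + ε) + α * max (x - q) 0 ^ (1 + ε) := by
  unfold L
  split_ifs with h
  · rw [max_eq_left (by linarith), max_eq_right (by linarith), zero_rpow hε]
    ring
  · rw [max_eq_right (by linarith), max_eq_left (by linarith), zero_rpow hε]
    ring

theorem convexOn_L {α ε : ℝ} (hα₀ : 0 ≤ α) (hα₁ : α ≤ 1) (hε : 0 ≤ ε) (x : ℝ) :
    ConvexOn ℝ univ (L α ε x) := by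
  have hp : 1 ≤ 1 + ε := by linarith
  have hright : ConvexOn ℝ univ fun q => max (q - x) 0 ^ (1 + ε) :=
    (((convexOn_id convex_univ).sub (concaveOn_const x convex_univ)).sup
      (convexOn_const 0 convex_univ)).rpow (fun _ _ => le_max_right _ _) hp
  have hleft : ConvexOn ℝ univ fun q => max (x - q) 0 ^ (1 + ε) :=
    (((convexOn_const x convex_univ).sub (concaveOn_id convex_univ)).sup
      (convexOn_const 0 convex_univ)).rpow (fun _ _ => le_max_right _ _) hp
  exact ((hright.smul (sub_nonneg.2 hα₁)).add (hleft.smul hα₀)).congr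
    fun q _ => (L_eq_max (by linarith) x q).symm

theorem convexOn_EnL {n : ℕ} {α ε : ℝ} (hα₀ : 0 ≤ α) (hα₁ : α ≤ 1) (hε : 0 ≤ ε)
    (x : Fin n → ℝ) : ConvexOn ℝ univ (EnL n α ε x) := by
  have hsum : ConvexOn ℝ univ (∑ i, L α ε (x i)) :=
    Finset.sum_induction _ (ConvexOn ℝ univ) (fun _ _ => ConvexOn.add)
      (convexOn_const 0 convex_univ) fun i _ => convexOn_L hα₀ hα₁ hε (x i)
  exact (hsum.smul (by positivity : (0 : ℝ) ≤ 1 / n)).congr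
    fun q _ => by simp [EnL, Finset.sum_apply]

theorem continuousAt_EnL_exponent (n : ℕ) (α : ℝ) (x : Fin n → ℝ) (q : ℝ) :
    ContinuousAt (fun ε => EnL n α ε x q) 0 := by
  unfold EnL L
  refine continuousAt_const.mul (tendsto_finsetSum _ fun i _ => ?_)
  split_ifs <;>
    exact continuousAt_const.mul (continuousAt_const.rpow (continuousAt_const.add continuousAt_id)
      (Or.inr (by norm_num)))

theorem le_L_zero_add_sub {α δ : ℝ} (hδ : 0 ≤ δ) (x q : ℝ) :
    δ * ((if x ≤ q then 1 else 0) - α) ≤ L α 0 x (q + δ) - L α 0 x q := by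
  simp only [L, add_zero, rpow_one]
  split_ifs <;> linarith

theorem le_L_zero_sub_sub {α δ : ℝ} (hδ : 0 ≤ δ) (x q : ℝ) :
    -δ * ((if x < q then 1 else 0) - α) ≤ L α 0 x (q - δ) - L α 0 x q := by
  simp only [L, add_zero, rpow_one]
  split_ifs <;> linarith

theorem mul_average_sub_le {n : ℕ} (hn : n ≠ 0) {c g : Fin n → ℝ} {α δ : ℝ}
    (h : ∀ i, δ * (c i - α) ≤ g i) : δ * ((1 / n) * ∑ i, c i - α) ≤ (1 / n) * ∑ i, g i := by
  have hn' : (n : ℝ) ≠ 0 := Nat.cast_ne_zero.2 hn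
  calc δ * ((1 / n) * ∑ i, c i - α) = (1 / n) * ∑ i, δ * (c i - α) := by
        simp only [← Finset.mul_sum, Finset.sum_sub_distrib, Finset.sum_const, Finset.card_univ,
          Fintype.card_fin, nsmul_eq_mul]
        field_simp
    _ ≤ (1 / n) * ∑ i, g i := by gcongr with i; exact h i

theorem EnL_sub_EnL (n : ℕ) (α ε : ℝ) (x : Fin n → ℝ) (q q' : ℝ) :
    EnL n α ε x q' - EnL n α ε x q = (1 / n) * ∑ i, (L α ε (x i) q' - L α ε (x i) q) := by
  rw [EnL, EnL, Finset.sum_sub_distrib, mul_sub]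

theorem le_EnL_zero_add_sub {n : ℕ} (hn : n ≠ 0) {α δ : ℝ} (hδ : 0 ≤ δ) (x : Fin n → ℝ)
    (q : ℝ) : δ * (Fn n x q - α) ≤ EnL n α 0 x (q + δ) - EnL n α 0 x q := by
  have hFn : Fn n x q = (1 / n) * ∑ i, if x i ≤ q then (1 : ℝ) else 0 := by
    rw [Finset.sum_boole, Fn, one_div_mul_eq_div]
  rw [hFn, EnL_sub_EnL]
  exact mul_average_sub_le hn fun i => le_L_zero_add_sub hδ (x i) q

theorem le_EnL_zero_sub_sub {n : ℕ} (hn : n ≠ 0) {α δ : ℝ} (hδ : 0 ≤ δ) (x : Fin n → ℝ)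
    (q : ℝ) : -δ * (FnMinus n x q - α) ≤ EnL n α 0 x (q - δ) - EnL n α 0 x q := by
  have hFn : FnMinus n x q = (1 / n) * ∑ i, if x i < q then (1 : ℝ) else 0 := by
    rw [Finset.sum_boole, FnMinus, one_div_mul_eq_div]
  rw [hFn, EnL_sub_EnL]
  exact mul_average_sub_le hn fun i => le_L_zero_sub_sub hδ (x i) q

theorem stmt_5 (n : ℕ) (hn : 1 ≤ n) (x : Fin n → ℝ) (α : ℝ)
    (hα : α ∈ Set.Ioo (0 : ℝ) 1) (qα : ℝ)
    (h1 : FnMinus n x qα < α) (h2 : α < Fn n x qα)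
    (qe : ℝ → ℝ) (hqe : ∀ ε : ℝ, 0 < ε → IsMinOn (EnL n α ε x) Set.univ (qe ε)) :
    (∀ δ : ℝ, 0 < δ → ∃ ε₀ : ℝ, 0 < ε₀ ∧ ∀ ε : ℝ, 0 < ε → ε < ε₀ →
      qe ε ∈ Set.Ioo (qα - δ) (qα + δ)) ∧
    Filter.Tendsto qe (nhdsWithin 0 (Set.Ioi 0)) (nhds qα) := by
  have hn₀ : n ≠ 0 := Nat.one_le_iff_ne_zero.1 hn
  have hlocal : ∀ δ > 0, ∀ᶠ ε in 𝓝[>] 0, qe ε ∈ Ioo (qα - δ) (qα + δ) := by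
    intro δ hδ
    have hright : EnL n α 0 x qα < EnL n α 0 x (qα + δ) := by
      linarith [le_EnL_zero_add_sub hn₀ (α := α) hδ.le x qα, mul_pos hδ (sub_pos.2 h2)]
    have hleft : EnL n α 0 x qα < EnL n α 0 x (qα - δ) := by
      linarith [le_EnL_zero_sub_sub hn₀ (α := α) hδ.le x qα, mul_pos hδ (sub_pos.2 h1)]
    have hlim (q : ℝ) : Tendsto (fun ε => EnL n α ε x q) (𝓝[>] 0) (𝓝 (EnL n α 0 x q)) :=
      (continuousAt_EnL_exponent n α x q).tendsto.mono_left nhdsWithin_le_nhds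
    filter_upwards [(hlim qα).eventually_lt (hlim _) hleft,
      (hlim qα).eventually_lt (hlim _) hright, self_mem_nhdsWithin] with ε hεleft hεright hε
    exact (convexOn_EnL hα.1.le hα.2.le hε.le x).mem_Ioo_of_le hδ.le
      (hqe ε hε (mem_univ qα)) hεleft hεright
  refine ⟨fun δ hδ => ?_, (nhds_basis_Ioo_pos qα).tendsto_right_iff.2 hlocal⟩
  obtain ⟨ε₀, hε₀, hsub⟩ := mem_nhdsGT_iff_exists_Ioo_subset.1 (hlocal δ hδ)
  exact ⟨ε₀, hε₀, fun ε hε hεε₀ => hsub ⟨hε, hεε₀⟩⟩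
end
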